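/- arXiv:2012.10602 — 2 statements merged into one kernel-verified Lean document; each statement's English description precedes it below -/
import Mathlib

section
/- Let functions count vectors r and r' consist of values r_{y=a,h=j}, r_{y=a}, r_{h=j} ∈ [0,1] (a,j ∈ {0,1}) with r_{y=a} = Σ_j r_{y=a,h=j} and r_{h=j} = Σ_a r_{y=a,h=j} (and similarly for r'), and suppose |r_{y=a,h=j} - r'_{y=a,h=j}| ≤ 1/m for all a,j, with m ≥ 3. Then the Gini-criterion gain J(r) = G(r_{y=1}) - r_{h=0}·G(r_{y=1,h=0}/r_{h=0}) - r_{h=1}·G(r_{y=1,h=1}/r_{h=1}) with G(q) = 4q(1-q) satisfies |J(r) - J(r')| ≤ 20/m. -/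
open Finset

/-- The Gini criterion `G(q) = 4q(1-q)`. -/
def gini (q : ℝ) : ℝ := 4 * q * (1 - q)

/-- The Gini-criterion gain of a split, computed from the vector of empirical
fractions `r a j = r_{y=a,h=j}`.  The term `r_{h=j} * G(r_{y=1,h=j}/r_{h=j})`
is written as `4 * r_{y=1,h=j} * (r_{h=j} - r_{y=1,h=j}) / r_{h=j}`, which is
`0` when `r_{h=j} = 0` (Lean's convention `x / 0 = 0`). -/
noncomputable def giniGain (r : Fin 2 → Fin 2 → ℝ) : ℝ :=
  gini (r 1 0 + r 1 1)
    - 4 * r 1 0 * ((r 0 0 + r 1 0) - r 1 0) / (r 0 0 + r 1 0)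
    - 4 * r 1 1 * ((r 0 1 + r 1 1) - r 1 1) / (r 0 1 + r 1 1)

/-!
The gain is `G(p) - 4·φ(r₁₀, r₀₀) - 4·φ(r₁₁, r₀₁)` with `p = r₁₀ + r₁₁` and
`φ(x, y) = xy/(x+y)` (with `φ(0, 0) = 0`). On `[0,1]` the parabola `G` is `4`-Lipschitz, since
`G(p) - G(q) = 4(p - q)(1 - p - q)`, and `p` moves by at most `2/m`; `φ` is
`1`-Lipschitz for the sup-distance on the quadrant, because
`xy(x'+y') - (x+y)x'y' = xx'(y - y') + yy'(x - x')`. Hence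
`|J(r) - J(r')| ≤ 8/m + 4/m + 4/m = 16/m`.
-/

lemma abs_gini_sub_le {p q : ℝ} (hp : p ∈ Set.Icc (0:ℝ) 1) (hq : q ∈ Set.Icc (0:ℝ) 1) :
    |gini p - gini q| ≤ 4 * |p - q| := by
  have hfactor : |1 - p - q| ≤ 1 :=
    abs_le.mpr ⟨by linarith [hp.2, hq.2], by linarith [hp.1, hq.1]⟩
  calc |gini p - gini q| = 4 * |p - q| * |1 - p - q| := by
        rw [show gini p - gini q = 4 * (p - q) * (1 - p - q) by unfold gini; ring,
          abs_mul, abs_mul, abs_of_pos four_pos]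
    _ ≤ 4 * |p - q| := mul_le_of_le_one_right (by positivity) hfactor

lemma mul_div_add_le_left {x y : ℝ} (hx : 0 ≤ x) (hy : 0 ≤ y) : x * y / (x + y) ≤ x := by
  rcases (add_nonneg hx hy).eq_or_lt with hxy | hxy
  · rw [← hxy, div_zero]; exact hx
  · rw [div_le_iff₀ hxy]; nlinarith

lemma abs_mul_div_add_sub_le {x y x' y' d : ℝ} (hx : 0 ≤ x) (hy : 0 ≤ y) (hx' : 0 ≤ x')
    (hy' : 0 ≤ y') (hxd : |x - x'| ≤ d) (hyd : |y - y'| ≤ d) :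
    |x * y / (x + y) - x' * y' / (x' + y')| ≤ d := by
  rcases (add_nonneg hx hy).eq_or_lt with hs | hs
  · obtain ⟨rfl, rfl⟩ : x = 0 ∧ y = 0 := ⟨by linarith, by linarith⟩
    rw [zero_mul, zero_div, zero_sub, abs_neg, abs_of_nonneg (by positivity)]
    exact (mul_div_add_le_left hx' hy').trans (by simpa [abs_of_nonneg hx'] using hxd)
  rcases (add_nonneg hx' hy').eq_or_lt with hs' | hs'
  · obtain ⟨rfl, rfl⟩ : x' = 0 ∧ y' = 0 := ⟨by linarith, by linarith⟩
    rw [zero_mul, zero_div, sub_zero, abs_of_nonneg (by positivity)]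
    exact (mul_div_add_le_left hx hy).trans (by simpa [abs_of_nonneg hx] using hxd)
  have hnum : |x * y * (x' + y') - (x + y) * (x' * y')| ≤ d * ((x + y) * (x' + y')) :=
    calc |x * y * (x' + y') - (x + y) * (x' * y')|
        = |x * x' * (y - y') + y * y' * (x - x')| := by ring_nf
      _ ≤ x * x' * |y - y'| + y * y' * |x - x'| := by
        refine (abs_add_le _ _).trans_eq ?_
        rw [abs_mul (x * x'), abs_mul (y * y'), abs_of_nonneg (mul_nonneg hx hx'),
          abs_of_nonneg (mul_nonneg hy hy')]
      _ ≤ x * x' * d + y * y' * d := by gcongr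
      _ ≤ d * ((x + y) * (x' + y')) := by
        have hd : 0 ≤ d := (abs_nonneg _).trans hxd
        nlinarith [mul_nonneg (mul_nonneg hx hy') hd, mul_nonneg (mul_nonneg hy hx') hd]
  rw [div_sub_div _ _ hs.ne' hs'.ne', abs_div, abs_of_pos (mul_pos hs hs'),
    div_le_iff₀ (mul_pos hs hs')]
  exact hnum

lemma giniGain_eq (r : Fin 2 → Fin 2 → ℝ) :
    giniGain r = gini (r 1 0 + r 1 1) - 4 * (r 1 0 * r 0 0 / (r 1 0 + r 0 0))
      - 4 * (r 1 1 * r 0 1 / (r 1 1 + r 0 1)) := by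
  unfold giniGain
  ring

lemma row_one_sum_mem_Icc (r : Fin 2 → Fin 2 → ℝ) (hr : ∀ a j, 0 ≤ r a j)
    (hsum : ∑ a : Fin 2, ∑ j : Fin 2, r a j = 1) : r 1 0 + r 1 1 ∈ Set.Icc (0:ℝ) 1 := by
  simp only [Fin.sum_univ_two] at hsum
  exact ⟨add_nonneg (hr 1 0) (hr 1 1), by linarith [hr 0 0, hr 0 1]⟩

theorem giniGain_sensitivity_general (m : ℝ) (r r' : Fin 2 → Fin 2 → ℝ)
    (hr : ∀ a j, r a j ∈ Set.Icc (0:ℝ) 1)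
    (hr' : ∀ a j, r' a j ∈ Set.Icc (0:ℝ) 1)
    (hsum : ∑ a : Fin 2, ∑ j : Fin 2, r a j = 1)
    (hsum' : ∑ a : Fin 2, ∑ j : Fin 2, r' a j = 1)
    (hclose : ∀ a j, |r a j - r' a j| ≤ 1 / m) :
    |giniGain r - giniGain r'| ≤ 20 / m := by
  have hd : 0 ≤ 1 / m := (abs_nonneg _).trans (hclose 0 0)
  have hp := row_one_sum_mem_Icc r (fun a j => (hr a j).1) hsum
  have hp' := row_one_sum_mem_Icc r' (fun a j => (hr' a j).1) hsum'
  have hpp' : |(r 1 0 + r 1 1) - (r' 1 0 + r' 1 1)| ≤ 2 * (1 / m) := by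
    rw [add_sub_add_comm, two_mul]
    exact (abs_add_le _ _).trans (add_le_add (hclose 1 0) (hclose 1 1))
  have hG : |gini (r 1 0 + r 1 1) - gini (r' 1 0 + r' 1 1)| ≤ 8 * (1 / m) :=
    (abs_gini_sub_le hp hp').trans (by linarith)
  have h0 := abs_mul_div_add_sub_le (hr 1 0).1 (hr 0 0).1 (hr' 1 0).1 (hr' 0 0).1
    (hclose 1 0) (hclose 0 0)
  have h1 := abs_mul_div_add_sub_le (hr 1 1).1 (hr 0 1).1 (hr' 1 1).1 (hr' 0 1).1
    (hclose 1 1) (hclose 0 1)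
  calc _ = |(gini (r 1 0 + r 1 1) - gini (r' 1 0 + r' 1 1))
        - 4 * (r 1 0 * r 0 0 / (r 1 0 + r 0 0) - r' 1 0 * r' 0 0 / (r' 1 0 + r' 0 0))
        - 4 * (r 1 1 * r 0 1 / (r 1 1 + r 0 1) - r' 1 1 * r' 0 1 / (r' 1 1 + r' 0 1))| := by
        rw [giniGain_eq, giniGain_eq]; ring_nf
    _ ≤ 8 * (1 / m) + 4 * (1 / m) + 4 * (1 / m) := by
        refine (abs_sub _ _).trans (add_le_add ((abs_sub _ _).trans (add_le_add hG ?_)) ?_) <;>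
          rw [abs_mul, abs_of_pos four_pos] <;> gcongr
    _ ≤ 20 / m := by rw [div_eq_mul_one_div 20 m]; linarith

theorem giniGain_sensitivity (m : ℝ) (hm : 3 ≤ m) (r r' : Fin 2 → Fin 2 → ℝ)
    (hr : ∀ a j, r a j ∈ Set.Icc (0:ℝ) 1)
    (hr' : ∀ a j, r' a j ∈ Set.Icc (0:ℝ) 1)
    (hsum : ∑ a : Fin 2, ∑ j : Fin 2, r a j = 1)
    (hsum' : ∑ a : Fin 2, ∑ j : Fin 2, r' a j = 1)
    (hclose : ∀ a j, |r a j - r' a j| ≤ 1 / m) :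
    |giniGain r - giniGain r'| ≤ 20 / m :=
  giniGain_sensitivity_general m r r' hr hr' hsum hsum' hclose
end

section
/- The Laplace mechanism is α-differentially private: let f be a function from datasets to ℝ with sensitivity Δ_f = max over neighboring datasets S,S' of |f(S) - f(S')|. The mechanism that outputs f(S) + Z, where Z is Laplace-distributed with scale Δ_f/α, satisfies: for all neighboring S, S' and all measurable sets O ⊆ ℝ, P(f(S)+Z ∈ O) ≤ e^α · P(f(S')+Z ∈ O). -/
open MeasureTheory

/-- The centered Laplace distribution with scale `Δ/α`, written with density
`(α/(2Δ)) * exp (-α|z|/Δ)`. -/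
noncomputable def laplaceNoise (α Δ : ℝ) : Measure ℝ :=
  volume.withDensity fun z => ENNReal.ofReal (α / (2 * Δ) * Real.exp (-(α * |z|) / Δ))

lemma laplace_map_apply (α Δ c : ℝ) (O : Set ℝ) (hO : MeasurableSet O) :
    Measure.map (fun z => c + z) (laplaceNoise α Δ) O
      = ∫⁻ x in O, ENNReal.ofReal (α / (2 * Δ) * Real.exp (-(α * |x - c|) / Δ)) := by
  rw [Measure.map_apply (measurable_const_add c) hO, laplaceNoise,
    withDensity_apply _ ((measurable_const_add c) hO)]
  have h := (measurePreserving_add_left (volume : Measure ℝ) c).setLIntegral_comp_preimage hO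
    (f := fun x => ENNReal.ofReal (α / (2 * Δ) * Real.exp (-(α * |x - c|) / Δ)))
    (by measurability)
  simpa [add_sub_cancel_left] using h

/-- The Laplace mechanism is `α`-differentially private:  if `Δ` bounds the
sensitivity of `f` over neighboring datasets, then releasing `f S + Z` with
`Z ∼ Lap(Δ/α)` satisfies `P(f S + Z ∈ O) ≤ exp α * P(f S' + Z ∈ O)` for all
neighboring `S, S'` and all measurable `O`. -/
theorem laplace_mechanism_private {D : Type*} (Neighbor : D → D → Prop)
    (f : D → ℝ) (α Δ : ℝ) (hα : 0 < α) (hΔ : 0 < Δ)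
    (hsens : ∀ S S', Neighbor S S' → |f S - f S'| ≤ Δ) :
    ∀ S S', Neighbor S S' → ∀ O : Set ℝ, MeasurableSet O →
      Measure.map (fun z => f S + z) (laplaceNoise α Δ) O ≤
        ENNReal.ofReal (Real.exp α) *
          Measure.map (fun z => f S' + z) (laplaceNoise α Δ) O := by
  intro S S' hN O hO
  rw [laplace_map_apply α Δ (f S) O hO, laplace_map_apply α Δ (f S') O hO,
    ← lintegral_const_mul' _ _ (by simp)]
  refine lintegral_mono fun x => ?_
  rw [← ENNReal.ofReal_mul (Real.exp_nonneg α)]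
  refine ENNReal.ofReal_le_ofReal ?_
  rw [← mul_assoc, mul_comm (Real.exp α), mul_assoc, ← Real.exp_add]
  refine mul_le_mul_of_nonneg_left (Real.exp_le_exp.2 ?_)
    (by positivity)
  have h1 : |x - f S'| - |x - f S| ≤ Δ := by
    calc |x - f S'| - |x - f S| ≤ |(x - f S') - (x - f S)| := abs_sub_abs_le_abs_sub _ _
    _ = |f S - f S'| := by rw [show (x - f S') - (x - f S) = f S - f S' by ring, abs_sub_comm]
    _ ≤ Δ := hsens S S' hN
  rw [div_le_iff₀ hΔ, add_mul, div_mul_cancel₀ _ hΔ.ne']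
  nlinarith
end
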